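/- The Shannon entropy E[-log f(X)] of the unit-Gompertz distribution equals 1 - log(αβ) - (1+β)(e^α/β)Γ(0, α), where Γ(0,α) = ∫_α^∞ e^(-t)/t dt. -/

import Mathlib

/-!
The CDF `F x = exp (-α (x^(-β) - 1))` satisfies `F' = f`, and
`-log f = -log (αβ) + α (x^(-β) - 1) + (1 + β) log x`.
Since `α (x^(-β))' F = -f`, and the substitution `u = α x^(-β)` turns `∫ F x / x dx`
into `(e^α / β) Γ(0, α x^(-β))`, integration by parts of `log x · f` shows that
`Φ = (1 - log (αβ) + α (x^(-β) - 1)) F + (1 + β) (log x · F - (e^α / β) Γ(0, α x^(-β)))`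
is a primitive of `-f log f` on `(0, ∞)`. `Φ 1` is the claimed value, and `Φ → 0` at `0⁺`
because `F` decays there faster than any power of `x`.
-/
open MeasureTheory Real

noncomputable def incGamma (s x : ℝ) : ℝ := ∫ u in Set.Ioi x, u ^ (s - 1) * Real.exp (-u)

open Set Filter Topology

section IncGamma

variable {s : ℝ}

lemma continuousOn_rpow_mul_exp_neg (s : ℝ) :
    ContinuousOn (fun u : ℝ => u ^ (s - 1) * exp (-u)) (Ioi 0) := by
  intro u hu
  exact ((continuousAt_rpow_const u _ (Or.inl (ne_of_gt hu))).mul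
    (continuous_exp.comp continuous_neg).continuousAt).continuousWithinAt

lemma integrableOn_rpow_mul_exp_neg_Ioi (s : ℝ) {a : ℝ} (ha : 0 < a) :
    IntegrableOn (fun u : ℝ => u ^ (s - 1) * exp (-u)) (Ioi a) := by
  refine integrable_of_isBigO_exp_neg one_half_pos
    ((continuousOn_rpow_mul_exp_neg s).mono fun u hu => ha.trans_le hu) ?_
  simpa only [mul_comm] using (Gamma_integrand_isLittleO (s - 1)).isBigO

lemma incGamma_eq_intervalIntegral_add {a b : ℝ} (ha : 0 < a) (hab : a ≤ b) :
    incGamma s a = (∫ u in a..b, u ^ (s - 1) * exp (-u)) + incGamma s b := by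
  rw [intervalIntegral.integral_of_le hab, incGamma, incGamma, ← Ioc_union_Ioi_eq_Ioi hab,
    setIntegral_union (Ioc_disjoint_Ioi le_rfl) measurableSet_Ioi
      ((integrableOn_rpow_mul_exp_neg_Ioi s ha).mono_set Ioc_subset_Ioi_self)
      (integrableOn_rpow_mul_exp_neg_Ioi s (ha.trans_le hab))]

lemma hasDerivAt_incGamma {x : ℝ} (hx : 0 < x) :
    HasDerivAt (incGamma s) (-(x ^ (s - 1) * exp (-x))) x := by
  have hx2 : x / 2 < x := half_lt_self hx
  have hcont : ContinuousAt (fun u : ℝ => u ^ (s - 1) * exp (-u)) x :=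
    (continuousOn_rpow_mul_exp_neg s).continuousAt (Ioi_mem_nhds hx)
  have hFTC : HasDerivAt (fun b => incGamma s (x / 2) - ∫ u in x / 2..b, u ^ (s - 1) * exp (-u))
      (-(x ^ (s - 1) * exp (-x))) x :=
    (intervalIntegral.integral_hasDerivAt_right
      ((intervalIntegrable_iff_integrableOn_Ioc_of_le hx2.le).2
        ((integrableOn_rpow_mul_exp_neg_Ioi s (half_pos hx)).mono_set Ioc_subset_Ioi_self))
      ((continuousOn_rpow_mul_exp_neg s).stronglyMeasurableAtFilter isOpen_Ioi x hx)
      hcont).const_sub _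
  refine hFTC.congr_of_eventuallyEq ?_
  filter_upwards [Ioi_mem_nhds hx2] with b hb
  rw [incGamma_eq_intervalIntegral_add (half_pos hx) (le_of_lt hb), add_sub_cancel_left]

lemma tendsto_incGamma_atTop : Tendsto (incGamma s) atTop (𝓝 0) := by
  have h := (intervalIntegral_tendsto_integral_Ioi 1 (integrableOn_rpow_mul_exp_neg_Ioi s one_pos)
    tendsto_id).const_sub (incGamma s 1)
  rw [← incGamma, sub_self] at h
  refine h.congr' ?_
  filter_upwards [eventually_ge_atTop 1] with b hb
  rw [id, incGamma_eq_intervalIntegral_add one_pos hb, add_sub_cancel_left]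

end IncGamma

lemma hasDerivAt_const_div_rpow {β x : ℝ} (c : ℝ) (hx : 0 < x) :
    HasDerivAt (fun y => c / y ^ β) (-(β * (c / x ^ β) / x)) x := by
  have hxβ : x ^ β ≠ 0 := (rpow_pos_of_pos hx β).ne'
  refine ((hasDerivAt_const x c).div (hasDerivAt_rpow_const (Or.inl hx.ne')) hxβ).congr_deriv ?_
  rw [rpow_sub_one hx.ne']
  field_simp
  ring

namespace UnitGompertz

variable {α β x : ℝ}

noncomputable def cdf (α β x : ℝ) : ℝ := exp (-α * (1 / x ^ β - 1))

noncomputable def pdf (α β x : ℝ) : ℝ := α * β * cdf α β x / x ^ (1 + β)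

noncomputable def entropyPrimitive (α β x : ℝ) : ℝ :=
  (1 - log (α * β) + α * (1 / x ^ β - 1)) * cdf α β x
    + (1 + β) * (log x * cdf α β x - exp α / β * incGamma 0 (α / x ^ β))

lemma pdf_eq_mul_cdf (hx : 0 < x) : pdf α β x = α * β / x * (1 / x ^ β) * cdf α β x := by
  rw [pdf, rpow_add hx, rpow_one]
  field_simp

lemma hasDerivAt_cdf (hx : 0 < x) : HasDerivAt (cdf α β) (pdf α β x) x := by
  refine (((hasDerivAt_const_div_rpow 1 hx).sub_const 1).const_mul (-α)).exp.congr_deriv ?_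
  rw [pdf_eq_mul_cdf hx, cdf]
  ring

lemma neg_log_pdf (hα : 0 < α) (hβ : 0 < β) (hx : 0 < x) :
    -log (pdf α β x) = -log (α * β) + α * (1 / x ^ β - 1) + (1 + β) * log x := by
  rw [pdf, cdf, log_div (by positivity) (rpow_pos_of_pos hx _).ne',
    log_mul (by positivity) (exp_ne_zero _), log_exp, log_rpow hx]
  ring

lemma hasDerivAt_incGamma_zero_div_rpow (hα : 0 < α) (hβ : β ≠ 0) (hx : 0 < x) :
    HasDerivAt (fun y => exp α / β * incGamma 0 (α / y ^ β)) (cdf α β x / x) x := by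
  have hv : 0 < α / x ^ β := div_pos hα (rpow_pos_of_pos hx β)
  refine (((hasDerivAt_incGamma hv).comp x (hasDerivAt_const_div_rpow α hx)).const_mul
    (exp α / β)).congr_deriv ?_
  rw [cdf, zero_sub, rpow_neg_one, mul_sub, mul_one, sub_eq_add_neg, neg_neg, exp_add,
    neg_mul, mul_one_div]
  field_simp

lemma hasDerivAt_entropyPrimitive (hα : 0 < α) (hβ : 0 < β) (hx : 0 < x) :
    HasDerivAt (entropyPrimitive α β) (negMulLog (pdf α β x)) x := by
  have hF := hasDerivAt_cdf (α := α) (β := β) hx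
  have hpoly := ((hasDerivAt_const_div_rpow (β := β) 1 hx).sub_const 1).const_mul α |>.const_add
    (1 - log (α * β)) |>.mul hF
  have hlog := ((hasDerivAt_log hx.ne').mul hF).sub
    (hasDerivAt_incGamma_zero_div_rpow hα hβ.ne' hx)
  refine (hpoly.add (hlog.const_mul (1 + β))).congr_deriv ?_
  have hpdf : α * -(β * (1 / x ^ β) / x) * cdf α β x = -pdf α β x := by
    rw [pdf_eq_mul_cdf hx]
    ring
  rw [hpdf, negMulLog, neg_mul, ← mul_neg, mul_comm, neg_log_pdf hα hβ hx]
  ring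

lemma tendsto_rpow_mul_cdf_nhdsGT_zero (hα : 0 < α) (hβ : 0 < β) (p : ℝ) :
    Tendsto (fun x => x ^ p * cdf α β x) (𝓝[>] 0) (𝓝 0) := by
  have hv : Tendsto (fun x : ℝ => x ^ (-β)) (𝓝[>] 0) atTop :=
    tendsto_rpow_neg_nhdsGT_zero (neg_lt_zero.2 hβ)
  have h := ((tendsto_rpow_mul_exp_neg_mul_atTop_nhds_zero (-p / β) α hα).comp hv).const_mul
    (exp α)
  rw [mul_zero] at h
  refine h.congr' ?_
  filter_upwards [self_mem_nhdsWithin] with x (hx : 0 < x)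
  have hexponent : -β * (-p / β) = p := by field_simp
  rw [Function.comp_apply, ← rpow_mul hx.le, hexponent, cdf, rpow_neg hx.le, one_div, mul_sub,
    mul_one, sub_eq_add_neg, neg_neg, exp_add]
  ring

lemma continuousOn_pdf (hα : 0 < α) (hβ : 0 < β) : ContinuousOn (pdf α β) (Ici 0) := by
  intro x hx
  rcases (mem_Ici.1 hx).eq_or_lt with rfl | hx
  · have h := (tendsto_rpow_mul_cdf_nhdsGT_zero hα hβ (-(1 + β))).const_mul (α * β)
    rw [mul_zero] at h
    refine continuousWithinAt_Ioi_iff_Ici.1 ?_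
    rw [ContinuousWithinAt, pdf, zero_rpow (by positivity), div_zero]
    refine h.congr' ?_
    filter_upwards [self_mem_nhdsWithin] with x (hx : 0 < x)
    rw [pdf, rpow_neg hx.le]
    ring
  · exact ((continuousAt_const.mul (hasDerivAt_cdf hx).continuousAt).div
      (continuousAt_rpow_const x _ (Or.inl hx.ne')) (rpow_pos_of_pos hx _).ne').continuousWithinAt

lemma tendsto_entropyPrimitive_nhdsGT_zero (hα : 0 < α) (hβ : 0 < β) :
    Tendsto (entropyPrimitive α β) (𝓝[>] 0) (𝓝 0) := by
  have hΓ : Tendsto (fun x : ℝ => incGamma 0 (α * x ^ (-β))) (𝓝[>] 0) (𝓝 0) :=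
    tendsto_incGamma_atTop.comp
      ((tendsto_rpow_neg_nhdsGT_zero (neg_lt_zero.2 hβ)).const_mul_atTop hα)
  have h := ((((tendsto_rpow_mul_cdf_nhdsGT_zero hα hβ 0).const_mul (1 - log (α * β) - α)).add
    ((tendsto_rpow_mul_cdf_nhdsGT_zero hα hβ (-β)).const_mul α)).add
    ((((tendsto_log_mul_rpow_nhdsGT_zero one_pos).mul
      (tendsto_rpow_mul_cdf_nhdsGT_zero hα hβ (-1))).sub (hΓ.const_mul (exp α / β))).const_mul
      (1 + β)))
  simp only [mul_zero, add_zero, sub_zero] at h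
  refine h.congr' ?_
  filter_upwards [self_mem_nhdsWithin] with x (hx : 0 < x)
  rw [entropyPrimitive, rpow_zero, rpow_neg hx.le, rpow_neg_one, rpow_one, one_div,
    ← div_eq_mul_inv]
  field_simp
  ring

lemma entropyPrimitive_one :
    entropyPrimitive α β 1 = 1 - log (α * β) - (1 + β) * (exp α / β) * incGamma 0 α := by
  simp only [entropyPrimitive, cdf, one_rpow, div_one, sub_self, mul_zero, add_zero, log_one,
    exp_zero, mul_one, zero_sub]
  ring

end UnitGompertz

theorem unitGompertz_shannon_entropy (α β : ℝ) (hα : 0 < α) (hβ : 0 < β) :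
    let f : ℝ → ℝ := fun x => α * β * Real.exp (-α * (1 / x ^ β - 1)) / x ^ (1 + β)
    ∫ x in (0:ℝ)..1, (-Real.log (f x)) * f x
      = 1 - Real.log (α * β) - (1 + β) * (Real.exp α / β) * incGamma 0 α := by
  intro f
  have hint : IntervalIntegrable (fun x => negMulLog (UnitGompertz.pdf α β x)) volume 0 1 :=
    (continuous_negMulLog.comp_continuousOn ((UnitGompertz.continuousOn_pdf hα hβ).mono
      (by rw [uIcc_of_le zero_le_one]; exact Icc_subset_Ici_self))).intervalIntegrable
  have hFTC := intervalIntegral.integral_eq_sub_of_hasDerivAt_of_tendsto one_pos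
    (fun x hx => UnitGompertz.hasDerivAt_entropyPrimitive hα hβ hx.1) hint
    (UnitGompertz.tendsto_entropyPrimitive_nhdsGT_zero hα hβ)
    (UnitGompertz.hasDerivAt_entropyPrimitive hα hβ one_pos).continuousAt.continuousWithinAt
  rw [UnitGompertz.entropyPrimitive_one, sub_zero] at hFTC
  rw [← hFTC]
  congr 1 with x
  exact (mul_comm _ _).trans (neg_mul_comm _ _).symm
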